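/- arXiv:1908.03019 — 5 statements merged into one kernel-verified Lean document; each statement's English description precedes it below -/
import Mathlib

section
/- Let X be a set, R : X³ → X³ a map satisfying the functional tetrahedron equation, and σ : X → X an involution (σ ∘ σ = Id) which is a symmetry of R, i.e. (σ × σ × σ) ∘ R ∘ (σ × σ × σ) = R. Then both maps R̃ = (σ × Id × σ) ∘ R ∘ (Id × σ × Id) and R̂ = (Id × σ × Id) ∘ R ∘ (σ × Id × σ) satisfy the functional tetrahedron equation. -/
/-- Apply `R` to components 1, 2, 3 of a 6-tuple. -/
def map123 {X : Type*} (R : X × X × X → X × X × X) :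
    X × X × X × X × X × X → X × X × X × X × X × X :=
  fun (x1, x2, x3, x4, x5, x6) =>
    ((R (x1, x2, x3)).1, (R (x1, x2, x3)).2.1, (R (x1, x2, x3)).2.2, x4, x5, x6)

/-- Apply `R` to components 1, 4, 5 of a 6-tuple. -/
def map145 {X : Type*} (R : X × X × X → X × X × X) :
    X × X × X × X × X × X → X × X × X × X × X × X :=
  fun (x1, x2, x3, x4, x5, x6) =>
    ((R (x1, x4, x5)).1, x2, x3, (R (x1, x4, x5)).2.1, (R (x1, x4, x5)).2.2, x6)

/-- Apply `R` to components 2, 4, 6 of a 6-tuple. -/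
def map246 {X : Type*} (R : X × X × X → X × X × X) :
    X × X × X × X × X × X → X × X × X × X × X × X :=
  fun (x1, x2, x3, x4, x5, x6) =>
    (x1, (R (x2, x4, x6)).1, x3, (R (x2, x4, x6)).2.1, x5, (R (x2, x4, x6)).2.2)

/-- Apply `R` to components 3, 5, 6 of a 6-tuple. -/
def map356 {X : Type*} (R : X × X × X → X × X × X) :
    X × X × X × X × X × X → X × X × X × X × X × X :=
  fun (x1, x2, x3, x4, x5, x6) =>
    (x1, x2, (R (x3, x5, x6)).1, x4, (R (x3, x5, x6)).2.1, (R (x3, x5, x6)).2.2)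

/-- The functional tetrahedron equation. -/
def IsTetrahedron {X : Type*} (R : X × X × X → X × X × X) : Prop :=
  map123 R ∘ map145 R ∘ map246 R ∘ map356 R =
    map356 R ∘ map246 R ∘ map145 R ∘ map123 R

/-- Apply `f`, `g`, `h` to the first, second, third components of a triple. -/
def triple {X : Type*} (f g h : X → X) : X × X × X → X × X × X :=
  fun (a, b, c) => (f a, g b, h c)

/-! The twisted map `R̃ = (σ × id × σ) ∘ R ∘ (id × σ × id)` satisfies
`R̃ ∘ (id × σ × id) = (σ × id × σ) ∘ R` and, by the symmetry, `R̃ ∘ (σ × id × σ) = (id × σ × id) ∘ R`;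
in particular `R̃ = R̂`. Hence conjugating the tetrahedron equation of `R` by `σ` on the components
1, 3, 4, 6 of `X⁶` gives that of `R̃`: every factor `R̃^(abc)` meets an argument twisted by
`id × σ × id` or `σ × id × σ` on its three components and turns it into the other twist, and after
the four factors of either side the twist pattern is back to `σ` on 1, 3, 4, 6. -/

section Gauge

variable {X : Type*}

theorem triple_comp_triple (f g h f' g' h' : X → X) :
    triple f g h ∘ triple f' g' h' = triple (f ∘ f') (g ∘ g') (h ∘ h') := rfl

def gauge1346 (σ : X → X) : X × X × X × X × X × X → X × X × X × X × X × X :=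
  fun (x1, x2, x3, x4, x5, x6) => (σ x1, x2, σ x3, σ x4, x5, σ x6)

theorem gauge1346_surjective {σ : X → X} (hσ : Function.Surjective σ) :
    Function.Surjective (gauge1346 σ) := by
  rintro ⟨y1, y2, y3, y4, y5, y6⟩
  obtain ⟨x1, rfl⟩ := hσ y1
  obtain ⟨x3, rfl⟩ := hσ y3
  obtain ⟨x4, rfl⟩ := hσ y4
  obtain ⟨x6, rfl⟩ := hσ y6
  exact ⟨(x1, y2, x3, x4, y5, x6), rfl⟩

theorem IsTetrahedron.of_gauge {R R' : X × X × X → X × X × X} {σ : X → X}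
    (hσ : Function.Surjective σ) (hR : IsTetrahedron R)
    (hmid : R' ∘ triple id σ id = triple σ id σ ∘ R)
    (hout : R' ∘ triple σ id σ = triple id σ id ∘ R) :
    IsTetrahedron R' := by
  have hmid' a b c : R' (a, σ b, c) = triple σ id σ (R (a, b, c)) := congrFun hmid (a, b, c)
  have hout' a b c : R' (σ a, b, σ c) = triple id σ id (R (a, b, c)) := congrFun hout (a, b, c)
  have hlhs : (map123 R' ∘ map145 R' ∘ map246 R' ∘ map356 R') ∘ gauge1346 σ =
      gauge1346 σ ∘ (map123 R ∘ map145 R ∘ map246 R ∘ map356 R) := by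
    funext ⟨x1, x2, x3, x4, x5, x6⟩
    simp [map123, map145, map246, map356, gauge1346, triple, hmid', hout']
  have hrhs : (map356 R' ∘ map246 R' ∘ map145 R' ∘ map123 R') ∘ gauge1346 σ =
      gauge1346 σ ∘ (map356 R ∘ map246 R ∘ map145 R ∘ map123 R) := by
    funext ⟨x1, x2, x3, x4, x5, x6⟩
    simp [map123, map145, map246, map356, gauge1346, triple, hmid', hout']
  refine (gauge1346_surjective hσ).injective_comp_right ?_
  dsimp only
  rw [hlhs, hrhs, show _ = _ from hR]

section Symmetry

variable {R : X × X × X → X × X × X} {σ : X → X}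

theorem comp_triple_comm_of_symmetry (hinv : σ ∘ σ = id)
    (hsym : triple σ σ σ ∘ R ∘ triple σ σ σ = R) :
    R ∘ triple σ σ σ = triple σ σ σ ∘ R :=
  calc R ∘ triple σ σ σ = triple σ σ σ ∘ R ∘ (triple σ σ σ ∘ triple σ σ σ) := by
        nth_rw 1 [← hsym]; rfl
    _ = triple σ σ σ ∘ R := by rw [triple_comp_triple, hinv]; rfl

theorem twist_comp_triple_outer (hinv : σ ∘ σ = id)
    (hsym : triple σ σ σ ∘ R ∘ triple σ σ σ = R) :
    (triple σ id σ ∘ R ∘ triple id σ id) ∘ triple σ id σ = triple id σ id ∘ R :=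
  calc (triple σ id σ ∘ R ∘ triple id σ id) ∘ triple σ id σ
        = triple σ id σ ∘ (R ∘ triple σ σ σ) := rfl
    _ = (triple σ id σ ∘ triple σ σ σ) ∘ R := by rw [comp_triple_comm_of_symmetry hinv hsym]; rfl
    _ = triple id σ id ∘ R := by rw [triple_comp_triple, hinv]; rfl

theorem twist_comm_of_symmetry (hinv : σ ∘ σ = id)
    (hsym : triple σ σ σ ∘ R ∘ triple σ σ σ = R) :
    triple id σ id ∘ R ∘ triple σ id σ = triple σ id σ ∘ R ∘ triple id σ id :=
  calc triple id σ id ∘ R ∘ triple σ id σ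
        = ((triple σ id σ ∘ R ∘ triple id σ id) ∘ triple σ id σ) ∘ triple σ id σ := by
          rw [twist_comp_triple_outer hinv hsym]; rfl
    _ = triple σ id σ ∘ R ∘ triple id σ id := by
          rw [Function.comp_assoc, triple_comp_triple, hinv]; rfl

end Symmetry

end Gauge

/-- an involutive symmetry of a tetrahedron map produces two new
tetrahedron maps. -/
theorem tetrahedron_of_involutive_symmetry {X : Type*} (R : X × X × X → X × X × X)
    (sigma : X → X) (hR : IsTetrahedron R) (hinv : sigma ∘ sigma = id)
    (hsym : triple sigma sigma sigma ∘ R ∘ triple sigma sigma sigma = R) :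
    IsTetrahedron (triple sigma id sigma ∘ R ∘ triple id sigma id) ∧
    IsTetrahedron (triple id sigma id ∘ R ∘ triple sigma id sigma) := by
  have hsurj : Function.Surjective sigma := Function.RightInverse.surjective (congrFun hinv)
  have hmid : (triple sigma id sigma ∘ R ∘ triple id sigma id) ∘ triple id sigma id =
      triple sigma id sigma ∘ R := by
    rw [Function.comp_assoc, Function.comp_assoc, triple_comp_triple, hinv]; rfl
  have htilde := hR.of_gauge hsurj hmid (twist_comp_triple_outer hinv hsym)
  exact ⟨htilde, twist_comm_of_symmetry hinv hsym ▸ htilde⟩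
end

section
/- Let X be a set, R : X³ → X³ a map satisfying the functional tetrahedron equation, and σ : X → X an involution which is a symmetry of R, i.e. (σ × σ × σ) ∘ R ∘ (σ × σ × σ) = R. For 1 ≤ i ≤ 6 let σᵢ : X⁶ → X⁶ act as σ on the i-th component and as the identity on the others. Then the following three entwining tetrahedron equations hold as maps X⁶ → X⁶ (composition applies the rightmost map first): (i) R^(123) ∘ (R^(145)∘σ₁) ∘ (R^(246)∘σ₂) ∘ (R^(356)∘σ₃) = (R^(356)∘σ₃) ∘ (R^(246)∘σ₂) ∘ (R^(145)∘σ₁) ∘ R^(123); (ii) (R^(123)∘σ₃) ∘ (R^(145)∘σ₅) ∘ (R^(246)∘σ₆) ∘ R^(356) = R^(356) ∘ (R^(246)∘σ₆) ∘ (R^(145)∘σ₅) ∘ (R^(123)∘σ₃); (iii) (R^(123)∘σ₃) ∘ (R^(145)∘σ₁∘σ₅) ∘ (R^(246)∘σ₂∘σ₆) ∘ (R^(356)∘σ₃) = (R^(356)∘σ₃) ∘ (R^(246)∘σ₂∘σ₆) ∘ (R^(145)∘σ₁∘σ₅) ∘ (R^(123)∘σ₃). -/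
/-- Apply `sigma` to the 1st component of a 6-tuple. -/
def sig1 {X : Type*} (sigma : X → X) : X × X × X × X × X × X → X × X × X × X × X × X :=
  fun (x1, x2, x3, x4, x5, x6) => (sigma x1, x2, x3, x4, x5, x6)

/-- Apply `sigma` to the 2nd component of a 6-tuple. -/
def sig2 {X : Type*} (sigma : X → X) : X × X × X × X × X × X → X × X × X × X × X × X :=
  fun (x1, x2, x3, x4, x5, x6) => (x1, sigma x2, x3, x4, x5, x6)

/-- Apply `sigma` to the 3rd component of a 6-tuple. -/
def sig3 {X : Type*} (sigma : X → X) : X × X × X × X × X × X → X × X × X × X × X × X :=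
  fun (x1, x2, x3, x4, x5, x6) => (x1, x2, sigma x3, x4, x5, x6)

/-- Apply `sigma` to the 5th component of a 6-tuple. -/
def sig5 {X : Type*} (sigma : X → X) : X × X × X × X × X × X → X × X × X × X × X × X :=
  fun (x1, x2, x3, x4, x5, x6) => (x1, x2, x3, x4, sigma x5, x6)

/-- Apply `sigma` to the 6th component of a 6-tuple. -/
def sig6 {X : Type*} (sigma : X → X) : X × X × X × X × X × X → X × X × X × X × X × X :=
  fun (x1, x2, x3, x4, x5, x6) => (x1, x2, x3, x4, x5, sigma x6)

/-! An involutive symmetry `σ` of `R` commutes with `R`. Each entwining equation is then the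
tetrahedron equation precomposed with a product of `σᵢ` (`σ₁σ₂σ₃`, `σ₃σ₅σ₆`, `σ₁σ₂σ₅σ₆` for (i), (ii),
(iii)): moving that product leftwards, it passes through `R^(abc)` for free when it misses `{a, b, c}`,
through `R` itself when it covers `{a, b, c}`, and elsewhere leaves behind the `σᵢ` decorating the
factor. -/

open Function

section Entwining

variable {X : Type*} {R : X × X × X → X × X × X} {σ : X → X}

theorem triple_involutive (hσ : Involutive σ) : Involutive (triple σ σ σ) :=
  fun ⟨a, b, c⟩ => by simp only [triple, hσ a, hσ b, hσ c]

theorem commute_triple_of_comp_comp_eq (hσ : Involutive σ)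
    (hsym : triple σ σ σ ∘ R ∘ triple σ σ σ = R) : Function.Commute R (triple σ σ σ) := fun x =>
  calc R (triple σ σ σ x) = triple σ σ σ (triple σ σ σ (R (triple σ σ σ x))) :=
        (triple_involutive hσ _).symm
    _ = triple σ σ σ (R x) := congrArg (triple σ σ σ) (congrFun hsym x)

theorem apply_sigma_sigma_sigma (hc : Function.Commute R (triple σ σ σ)) (a b c : X) :
    R (σ a, σ b, σ c) = (σ (R (a, b, c)).1, σ (R (a, b, c)).2.1, σ (R (a, b, c)).2.2) :=
  hc (a, b, c)

/- Oriented so that `simp` leaves at most one `σ` among the arguments of each `R`: a normal form, so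
both sides of an entwining equation evaluated pointwise reach the same term. -/
theorem apply_sigma_sigma_id (hσ : Involutive σ) (hc : Function.Commute R (triple σ σ σ))
    (a b c : X) :
    R (σ a, σ b, c) = (σ (R (a, b, σ c)).1, σ (R (a, b, σ c)).2.1, σ (R (a, b, σ c)).2.2) := by
  rw [← apply_sigma_sigma_sigma hc, hσ c]

theorem apply_sigma_id_sigma (hσ : Involutive σ) (hc : Function.Commute R (triple σ σ σ))
    (a b c : X) :
    R (σ a, b, σ c) = (σ (R (a, σ b, c)).1, σ (R (a, σ b, c)).2.1, σ (R (a, σ b, c)).2.2) := by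
  rw [← apply_sigma_sigma_sigma hc, hσ b]

theorem apply_id_sigma_sigma (hσ : Involutive σ) (hc : Function.Commute R (triple σ σ σ))
    (a b c : X) :
    R (a, σ b, σ c) = (σ (R (σ a, b, c)).1, σ (R (σ a, b, c)).2.1, σ (R (σ a, b, c)).2.2) := by
  rw [← apply_sigma_sigma_sigma hc, hσ a]

theorem IsTetrahedron.entwining_one (hR : IsTetrahedron R)
    (hc : Function.Commute R (triple σ σ σ)) :
    map123 R ∘ (map145 R ∘ sig1 σ) ∘ (map246 R ∘ sig2 σ) ∘ (map356 R ∘ sig3 σ) =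
      (map356 R ∘ sig3 σ) ∘ (map246 R ∘ sig2 σ) ∘ (map145 R ∘ sig1 σ) ∘ map123 R :=
  calc _ = (map123 R ∘ map145 R ∘ map246 R ∘ map356 R) ∘ (sig1 σ ∘ sig2 σ ∘ sig3 σ) := rfl
    _ = (map356 R ∘ map246 R ∘ map145 R ∘ map123 R) ∘ (sig1 σ ∘ sig2 σ ∘ sig3 σ) := by rw [hR]
    _ = _ := by
      funext ⟨x1, x2, x3, x4, x5, x6⟩
      simp only [comp_apply, map123, map145, map246, map356, sig1, sig2, sig3,
        apply_sigma_sigma_sigma hc]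

theorem IsTetrahedron.entwining_two (hR : IsTetrahedron R)
    (hc : Function.Commute R (triple σ σ σ)) :
    (map123 R ∘ sig3 σ) ∘ (map145 R ∘ sig5 σ) ∘ (map246 R ∘ sig6 σ) ∘ map356 R =
      map356 R ∘ (map246 R ∘ sig6 σ) ∘ (map145 R ∘ sig5 σ) ∘ (map123 R ∘ sig3 σ) :=
  calc _ = (map123 R ∘ map145 R ∘ map246 R ∘ map356 R) ∘ (sig3 σ ∘ sig5 σ ∘ sig6 σ) := by
        funext ⟨x1, x2, x3, x4, x5, x6⟩
        simp only [comp_apply, map123, map145, map246, map356, sig3, sig5, sig6,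
          apply_sigma_sigma_sigma hc]
    _ = (map356 R ∘ map246 R ∘ map145 R ∘ map123 R) ∘ (sig3 σ ∘ sig5 σ ∘ sig6 σ) := by rw [hR]
    _ = _ := rfl

theorem IsTetrahedron.entwining_three (hR : IsTetrahedron R) (hσ : Involutive σ)
    (hc : Function.Commute R (triple σ σ σ)) :
    (map123 R ∘ sig3 σ) ∘ (map145 R ∘ sig1 σ ∘ sig5 σ) ∘ (map246 R ∘ sig2 σ ∘ sig6 σ) ∘
        (map356 R ∘ sig3 σ) =
      (map356 R ∘ sig3 σ) ∘ (map246 R ∘ sig2 σ ∘ sig6 σ) ∘ (map145 R ∘ sig1 σ ∘ sig5 σ) ∘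
        (map123 R ∘ sig3 σ) :=
  calc _ = (map123 R ∘ map145 R ∘ map246 R ∘ map356 R) ∘
        (sig1 σ ∘ sig2 σ ∘ sig5 σ ∘ sig6 σ) := by
        funext ⟨x1, x2, x3, x4, x5, x6⟩
        simp only [comp_apply, map123, map145, map246, map356, sig1, sig2, sig3, sig5, sig6,
          apply_sigma_sigma_sigma hc, apply_sigma_id_sigma hσ hc, apply_id_sigma_sigma hσ hc]
    _ = (map356 R ∘ map246 R ∘ map145 R ∘ map123 R) ∘
        (sig1 σ ∘ sig2 σ ∘ sig5 σ ∘ sig6 σ) := by rw [hR]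
    _ = _ := by
        funext ⟨x1, x2, x3, x4, x5, x6⟩
        simp only [comp_apply, map123, map145, map246, map356, sig1, sig2, sig3, sig5, sig6,
          apply_sigma_sigma_sigma hc, apply_sigma_sigma_id hσ hc, apply_sigma_id_sigma hσ hc]

end Entwining

/-- entwining tetrahedron equations from an involutive symmetry. -/
theorem entwining_of_involutive_symmetry {X : Type*} (R : X × X × X → X × X × X)
    (sigma : X → X) (hR : IsTetrahedron R) (hinv : sigma ∘ sigma = id)
    (hsym : triple sigma sigma sigma ∘ R ∘ triple sigma sigma sigma = R) :
    (map123 R ∘ (map145 R ∘ sig1 sigma) ∘ (map246 R ∘ sig2 sigma) ∘ (map356 R ∘ sig3 sigma) =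
      (map356 R ∘ sig3 sigma) ∘ (map246 R ∘ sig2 sigma) ∘ (map145 R ∘ sig1 sigma) ∘ map123 R) ∧
    ((map123 R ∘ sig3 sigma) ∘ (map145 R ∘ sig5 sigma) ∘ (map246 R ∘ sig6 sigma) ∘ map356 R =
      map356 R ∘ (map246 R ∘ sig6 sigma) ∘ (map145 R ∘ sig5 sigma) ∘ (map123 R ∘ sig3 sigma)) ∧
    ((map123 R ∘ sig3 sigma) ∘ (map145 R ∘ sig1 sigma ∘ sig5 sigma) ∘
        (map246 R ∘ sig2 sigma ∘ sig6 sigma) ∘ (map356 R ∘ sig3 sigma) =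
      (map356 R ∘ sig3 sigma) ∘ (map246 R ∘ sig2 sigma ∘ sig6 sigma) ∘
        (map145 R ∘ sig1 sigma ∘ sig5 sigma) ∘ (map123 R ∘ sig3 sigma)) := by
  have hσ : Involutive sigma := congrFun hinv
  have hc := commute_triple_of_comp_comp_eq hσ hsym
  exact ⟨hR.entwining_one hc, hR.entwining_two hc, hR.entwining_three hσ hc⟩
end

section
/- Let R be the AKP map on positive reals, R(x₁,y₁,x₂,y₂,x₃,y₃) = (u₁,v₁,u₂,v₂,u₃,v₃) with u₁ = (x₂ + x₁·x₃)/x₃, u₂ = x₁·x₃, u₃ = x₂·x₃/(x₂ + x₁·x₃), v₁ = x₃·y₂, v₂ = (x₂ + x₁·x₃)·y₃/x₃, v₃ = y₂/x₁, and let R̃ be the map R̃(u₁,v₁,u₂,v₂,u₃,v₃) = (x₁,y₁,x₂,y₂,x₃,y₃) with x₁ = u₁·u₂/(u₂ + u₁·u₃), x₂ = u₁·u₃, x₃ = (u₂ + u₁·u₃)/u₁, y₁ = u₃·v₂, y₂ = u₁·v₁/(u₂ + u₁·u₃), y₃ = v₂/u₁. Then for all positive reals: (i) the components of R(x₁,y₁,x₂,y₂,x₃,y₃)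 always satisfy v₁ = u₂·v₃ (so R maps the constraint y₁ = x₂·y₃ to v₁ = u₂·v₃); (ii) R̃ ∘ R (x₁,y₁,x₂,y₂,x₃,y₃) = (x₁, x₂·y₃, x₂, y₂, x₃, y₃), hence R̃ ∘ R is the identity on the subset where y₁ = x₂·y₃; (iii) R ∘ R̃ (u₁,v₁,u₂,v₂,u₃,v₃) = (u₁, v₁, u₂, v₂, u₃, v₁/u₂), hence R ∘ R̃ is the identity on the subset where v₁ = u₂·v₃. -/
/-- The AKP map on 6-tuples of (positive) reals,
`(x1, y1, x2, y2, x3, y3) ↦ (u1, v1, u2, v2, u3, v3)`. -/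
noncomputable def RA : ℝ × ℝ × ℝ × ℝ × ℝ × ℝ → ℝ × ℝ × ℝ × ℝ × ℝ × ℝ :=
  fun (x1, _y1, x2, y2, x3, y3) =>
    ((x2 + x1 * x3) / x3, x3 * y2, x1 * x3, (x2 + x1 * x3) * y3 / x3,
      x2 * x3 / (x2 + x1 * x3), y2 / x1)

/-- The map `R̃` on 6-tuples of (positive) reals,
`(u1, v1, u2, v2, u3, v3) ↦ (x1, y1, x2, y2, x3, y3)`. -/
noncomputable def RB : ℝ × ℝ × ℝ × ℝ × ℝ × ℝ → ℝ × ℝ × ℝ × ℝ × ℝ × ℝ :=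
  fun (u1, v1, u2, v2, u3, _v3) =>
    (u1 * u2 / (u2 + u1 * u3), u3 * v2, u1 * u3, u1 * v1 / (u2 + u1 * u3),
      (u2 + u1 * u3) / u1, v2 / u1)

theorem RA_snd_eq_mul (x1 y1 x2 y2 x3 y3 : ℝ) (hx1 : x1 ≠ 0) :
    (RA (x1, y1, x2, y2, x3, y3)).2.1 =
      (RA (x1, y1, x2, y2, x3, y3)).2.2.1 * (RA (x1, y1, x2, y2, x3, y3)).2.2.2.2.2 := by
  simp only [RA]
  field_simp

-- Both maps preserve the common denominator, `u2 + u1 * u3 = x2 + x1 * x3`; after that every component cancels.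
theorem RB_RA (x1 y1 x2 y2 x3 y3 : ℝ) (hx3 : x3 ≠ 0) (hs : x2 + x1 * x3 ≠ 0) :
    RB (RA (x1, y1, x2, y2, x3, y3)) = (x1, x2 * y3, x2, y2, x3, y3) := by
  have hsum : x1 * x3 + (x2 + x1 * x3) / x3 * (x2 * x3 / (x2 + x1 * x3)) = x2 + x1 * x3 := by
    field_simp
    ring
  simp only [RA, RB, hsum, Prod.mk.injEq]
  generalize x2 + x1 * x3 = s at hs ⊢
  refine ⟨?_, ?_, ?_, ?_, ?_, ?_⟩ <;> field_simp

theorem RA_RB (u1 v1 u2 v2 u3 v3 : ℝ) (hu1 : u1 ≠ 0) (hu2 : u2 ≠ 0) (ht : u2 + u1 * u3 ≠ 0) :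
    RA (RB (u1, v1, u2, v2, u3, v3)) = (u1, v1, u2, v2, u3, v1 / u2) := by
  have hsum : u1 * u3 + u1 * u2 / (u2 + u1 * u3) * ((u2 + u1 * u3) / u1) = u2 + u1 * u3 := by
    field_simp
    ring
  simp only [RA, RB, hsum, Prod.mk.injEq]
  refine ⟨?_, ?_, ?_, ?_, ?_, ?_⟩ <;> field_simp

/-- (i) the image of `RA` always satisfies `v1 = u2 * v3`;
(ii) `RB ∘ RA` fixes all components except the second, which becomes `x2 * y3`,
hence `RB ∘ RA` is the identity where `y1 = x2 * y3`;
(iii) `RA ∘ RB` fixes all components except the sixth, which becomes `v1 / u2`,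
hence `RA ∘ RB` is the identity where `v3 = v1 / u2`. -/
theorem akp_inverse_relations :
    ∀ x1 y1 x2 y2 x3 y3 : ℝ, 0 < x1 → 0 < y1 → 0 < x2 → 0 < y2 → 0 < x3 → 0 < y3 →
      ((RA (x1, y1, x2, y2, x3, y3)).2.1 =
        (RA (x1, y1, x2, y2, x3, y3)).2.2.1 * (RA (x1, y1, x2, y2, x3, y3)).2.2.2.2.2) ∧
      (RB (RA (x1, y1, x2, y2, x3, y3)) = (x1, x2 * y3, x2, y2, x3, y3)) ∧
      (y1 = x2 * y3 → RB (RA (x1, y1, x2, y2, x3, y3)) = (x1, y1, x2, y2, x3, y3)) ∧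
      (RA (RB (x1, y1, x2, y2, x3, y3)) = (x1, y1, x2, y2, x3, y1 / x2)) ∧
      (y1 = x2 * y3 → RA (RB (x1, y1, x2, y2, x3, y3)) = (x1, y1, x2, y2, x3, y3)) := by
  intro x1 y1 x2 y2 x3 y3 hx1 _ hx2 _ hx3 _
  have hs : x2 + x1 * x3 ≠ 0 := by positivity
  have hBA := RB_RA x1 y1 x2 y2 x3 y3 hx3.ne' hs
  have hAB := RA_RB x1 y1 x2 y2 x3 y3 hx1.ne' hx2.ne' (by positivity)
  refine ⟨RA_snd_eq_mul x1 y1 x2 y2 x3 y3 hx1.ne', hBA, fun h => ?_, hAB, fun h => ?_⟩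
  · rw [hBA, h]
  · rw [hAB, h, mul_div_cancel_left₀ _ hx2.ne']
end

section
/- Let K be a commutative ring and let f, f₁, f₂, f₃, f₁₂, f₂₃, f₁₃, α₁, α₂, α₃ be elements of K satisfying the three copies of the discrete potential KdV equation (f₁₂ − f)·(f₁ − f₂) = α₁ − α₂, (f₂₃ − f)·(f₂ − f₃) = α₂ − α₃, and (f₁₃ − f)·(f₃ − f₁) = α₃ − α₁. Then the discrete potential KP equation holds: f₁₂·(f₁ − f₂) + f₂₃·(f₂ − f₃) + f₁₃·(f₃ − f₁) = 0. -/
/-- three copies of the discrete potential KdV equation on the faces of a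
cube imply the discrete potential KP equation. -/
theorem dpKP_of_dpKdV {K : Type*} [CommRing K]
    (f f1 f2 f3 f12 f23 f13 a1 a2 a3 : K)
    (h12 : (f12 - f) * (f1 - f2) = a1 - a2)
    (h23 : (f23 - f) * (f2 - f3) = a2 - a3)
    (h13 : (f13 - f) * (f3 - f1) = a3 - a1) :
    f12 * (f1 - f2) + f23 * (f2 - f3) + f13 * (f3 - f1) = 0 := by
  linear_combination h12 + h23 + h13
end

section
/- Let K be a division ring and let f₁, f₂, f₃, f₄, f₁₃, f₂₃, f₁₄, f₁₂₃, f₁₃₄ ∈ K with f₁ − f₂, f₄ − f₃, f₄ − f₂, D := (f₁₃ − f₁₄)·f₁ + (f₂₃ − f₁₃)·f₃ + (f₁₄ − f₂₃)·f₄ and D' := (f₁₃ − f₁₄)·f₁ + (f₂₃ − f₁₃)·f₃ + (f₁₄ − f₂₃)·f₂ all nonzero. Define f₁₂ = [f₁₃·(f₁ − f₃) + f₂₃·(f₃ − f₂)]·(f₁ − f₂)⁻¹, f₃₄ = [f₁₃·(f₁ − f₃) + f₁₄·(f₄ − f₁)]·(f₄ − f₃)⁻¹, f₂₄ = [f₁₃·(f₁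 − f₃) + f₂₃·(f₃ − f₂) + f₁₄·(f₄ − f₁)]·(f₄ − f₂)⁻¹, f₂₃₄ = [f₁₃₄·(f₁₄ − f₁₃)·(f₄ − f₁) − f₁₂₃·(f₁₃ − f₂₃)·(f₃ − f₄)]·D⁻¹, f₁₂₄ = [f₁₃₄·(f₁₄ − f₁₃)·(f₂ − f₁) − f₁₂₃·(f₁₃ − f₂₃)·(f₃ − f₂)]·D'⁻¹. Then all eight copies of the discrete potential KP equation on the cubic faces of the 4-dimensional hypercube hold, namely: f₁₂·(f₁−f₂) + f₂₃·(f₂−f₃) + f₁₃·(f₃−f₁) = 0; f₁₂·(f₁−f₂) + f₂₄·(f₂−f₄) + f₁₄·(f₄−f₁) = 0; f₁₃·(f₁−f₃) + f₃₄·(f₃−f₄) + f₁₄·(f₄−f₁) = 0; f₂₃·(f₂−f₃) + f₃₄·(f₃−f₄) + f₂₄·(f₄−f₂) = 0; f₁₂₃·(f₁₂−f₁₃) + f₁₃₄·(f₁₃−f₁₄) + f₁₂₄·(f₁₄−f₁₂) = 0; f₁₂₃·(f₁₂−f₂₃) + f₂₃₄·(f₂₃−f₂₄) + f₁₂₄·(f₂₄−f₁₂)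 = 0; f₁₂₃·(f₁₃−f₂₃) + f₂₃₄·(f₂₃−f₃₄) + f₁₃₄·(f₃₄−f₁₃) = 0; f₁₂₄·(f₁₄−f₂₄) + f₂₃₄·(f₂₄−f₃₄) + f₁₃₄·(f₃₄−f₁₄) = 0. In particular, the discrete potential KP equation is consistent on the 4-dimensional hypercube. -/
/-!
Clearing denominators turns the definitions of `f12`, `f34`, `f24` into the lower equations
dpKP(123), dpKP(134), dpKP(234), dpKP(124), and those of `f124`, `f234` into the upper equations
dpKP(234)₁, dpKP(124)₃ multiplied on the right by `f1 - f2` and `f4 - f3`. The alternating sum of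
the four upper equations vanishes identically, so one more upper equation suffices: the difference
dpKP(134)₂ - dpKP(234)₁ does not involve `f12`, and multiplied by `f4 - f2` it is a consequence of
the definitions of `f24`, `f124` and `f234`.
-/

section Ring

variable {K : Type*} [Ring K]

/-- `dpKP a b c x y z` is the left side of dpKP(ijk) for `x, y, z = f_i, f_j, f_k` and
`a, b, c = f_ij, f_jk, f_ik`; for the upper equations every value is shifted once more. -/
def dpKP (a b c x y z : K) : K :=
  a * (x - y) + b * (y - z) + c * (z - x)

theorem dpKP_upper_alternating_sum (f12 f13 f14 f23 f24 f34 f123 f124 f134 f234 : K) :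
    dpKP f123 f134 f124 f12 f13 f14 - dpKP f123 f234 f124 f12 f23 f24 +
      dpKP f123 f234 f134 f13 f23 f34 - dpKP f124 f234 f134 f14 f24 f34 = 0 := by
  unfold dpKP
  noncomm_ring

variable {f1 f2 f3 f4 f12 f13 f14 f23 f24 f34 f123 f124 f134 f234 : K}

theorem dpKP_lower_faces
    (k12 : f12 * (f1 - f2) = f13 * (f1 - f3) + f23 * (f3 - f2))
    (k34 : f34 * (f4 - f3) = f13 * (f1 - f3) + f14 * (f4 - f1))
    (k24 : f24 * (f4 - f2) = f13 * (f1 - f3) + f23 * (f3 - f2) + f14 * (f4 - f1)) :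
    dpKP f12 f23 f13 f1 f2 f3 = 0 ∧ dpKP f12 f24 f14 f1 f2 f4 = 0 ∧
      dpKP f13 f34 f14 f1 f3 f4 = 0 ∧ dpKP f23 f34 f24 f2 f3 f4 = 0 := by
  unfold dpKP
  refine ⟨?_, ?_, ?_, ?_⟩
  · linear_combination (norm := noncomm_ring) k12
  · linear_combination (norm := noncomm_ring) k12 - k24
  · linear_combination (norm := noncomm_ring) -k34
  · linear_combination (norm := noncomm_ring) k24 - k34

theorem dpKP_upper_faces [NoZeroDivisors K]
    (h12 : f1 - f2 ≠ 0) (h43 : f4 - f3 ≠ 0) (h42 : f4 - f2 ≠ 0)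
    (k12 : f12 * (f1 - f2) = f13 * (f1 - f3) + f23 * (f3 - f2))
    (k34 : f34 * (f4 - f3) = f13 * (f1 - f3) + f14 * (f4 - f1))
    (k24 : f24 * (f4 - f2) = f13 * (f1 - f3) + f23 * (f3 - f2) + f14 * (f4 - f1))
    (k124 : f124 * ((f13 - f14) * f1 + (f23 - f13) * f3 + (f14 - f23) * f2) =
      f134 * (f14 - f13) * (f2 - f1) - f123 * (f13 - f23) * (f3 - f2))
    (k234 : f234 * ((f13 - f14) * f1 + (f23 - f13) * f3 + (f14 - f23) * f4) =
      f134 * (f14 - f13) * (f4 - f1) - f123 * (f13 - f23) * (f3 - f4)) :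
    dpKP f123 f134 f124 f12 f13 f14 = 0 ∧ dpKP f123 f234 f124 f12 f23 f24 = 0 ∧
      dpKP f123 f234 f134 f13 f23 f34 = 0 ∧ dpKP f124 f234 f134 f14 f24 f34 = 0 := by
  have e5 : dpKP f123 f134 f124 f12 f13 f14 = 0 := (mul_eq_zero_iff_right h12).1 <| by
    unfold dpKP
    linear_combination (norm := noncomm_ring) (f123 - f124) * k12 - k124
  have e7 : dpKP f123 f234 f134 f13 f23 f34 = 0 := (mul_eq_zero_iff_right h43).1 <| by
    unfold dpKP
    linear_combination (norm := noncomm_ring) (f134 - f234) * k34 - k234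
  have e6 : dpKP f123 f234 f124 f12 f23 f24 = 0 := by
    have h65 : (dpKP f123 f234 f124 f12 f23 f24 - dpKP f123 f134 f124 f12 f13 f14) *
        (f4 - f2) = 0 := by
      unfold dpKP
      linear_combination (norm := noncomm_ring) (f124 - f234) * k24 - k234 + k124
    rw [← e5]
    exact sub_eq_zero.1 ((mul_eq_zero_iff_right h42).1 h65)
  refine ⟨e5, e6, e7, ?_⟩
  linear_combination (norm := noncomm_ring)
    e5 - e6 + e7 - dpKP_upper_alternating_sum f12 f13 f14 f23 f24 f34 f123 f124 f134 f234

end Ring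

/-- the discrete potential KP equation is consistent on the 4-dimensional
hypercube: the values `f12`, `f34`, `f24`, `f234`, `f124` computed from generic initial
data satisfy all eight copies of dpKP on the cubic faces of the hypercube. -/
theorem dpKP_consistency_4D {K : Type*} [DivisionRing K]
    (f1 f2 f3 f4 f13 f23 f14 f123 f134 : K)
    (h12 : f1 - f2 ≠ 0) (h43 : f4 - f3 ≠ 0) (h42 : f4 - f2 ≠ 0)
    (hD : (f13 - f14) * f1 + (f23 - f13) * f3 + (f14 - f23) * f4 ≠ 0)
    (hD' : (f13 - f14) * f1 + (f23 - f13) * f3 + (f14 - f23) * f2 ≠ 0)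
    (f12 f34 f24 f234 f124 : K)
    (hf12 : f12 = (f13 * (f1 - f3) + f23 * (f3 - f2)) * (f1 - f2)⁻¹)
    (hf34 : f34 = (f13 * (f1 - f3) + f14 * (f4 - f1)) * (f4 - f3)⁻¹)
    (hf24 : f24 = (f13 * (f1 - f3) + f23 * (f3 - f2) + f14 * (f4 - f1)) * (f4 - f2)⁻¹)
    (hf234 : f234 = (f134 * (f14 - f13) * (f4 - f1) - f123 * (f13 - f23) * (f3 - f4)) *
      ((f13 - f14) * f1 + (f23 - f13) * f3 + (f14 - f23) * f4)⁻¹)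
    (hf124 : f124 = (f134 * (f14 - f13) * (f2 - f1) - f123 * (f13 - f23) * (f3 - f2)) *
      ((f13 - f14) * f1 + (f23 - f13) * f3 + (f14 - f23) * f2)⁻¹) :
    (f12 * (f1 - f2) + f23 * (f2 - f3) + f13 * (f3 - f1) = 0) ∧
    (f12 * (f1 - f2) + f24 * (f2 - f4) + f14 * (f4 - f1) = 0) ∧
    (f13 * (f1 - f3) + f34 * (f3 - f4) + f14 * (f4 - f1) = 0) ∧
    (f23 * (f2 - f3) + f34 * (f3 - f4) + f24 * (f4 - f2) = 0) ∧
    (f123 * (f12 - f13) + f134 * (f13 - f14) + f124 * (f14 - f12) = 0) ∧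
    (f123 * (f12 - f23) + f234 * (f23 - f24) + f124 * (f24 - f12) = 0) ∧
    (f123 * (f13 - f23) + f234 * (f23 - f34) + f134 * (f34 - f13) = 0) ∧
    (f124 * (f14 - f24) + f234 * (f24 - f34) + f134 * (f34 - f14) = 0) := by
  have k12 := (eq_mul_inv_iff_mul_eq₀ h12).1 hf12
  have k34 := (eq_mul_inv_iff_mul_eq₀ h43).1 hf34
  have k24 := (eq_mul_inv_iff_mul_eq₀ h42).1 hf24
  have k124 := (eq_mul_inv_iff_mul_eq₀ hD').1 hf124
  have k234 := (eq_mul_inv_iff_mul_eq₀ hD).1 hf234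
  obtain ⟨e1, e2, e3, e4⟩ := dpKP_lower_faces k12 k34 k24
  obtain ⟨e5, e6, e7, e8⟩ := dpKP_upper_faces h12 h43 h42 k12 k34 k24 k124 k234
  exact ⟨e1, e2, e3, e4, e5, e6, e7, e8⟩
end
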